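/- arXiv:1607.00248 — 2 statements merged into one kernel-verified Lean document; each statement's English description precedes it below -/
import Mathlib

section
/- For k, l > 3, γ_gr(C_k ∘ C_l) = (k/2)(l−2) if k is even, and ⌊k/2⌋(l−2) + 1 if k is odd. -/
open SimpleGraph

/-- The closed neighborhood of a vertex. -/
def closedNbhd {V : Type*} (G : SimpleGraph V) (v : V) : Set V :=
  insert v (G.neighborSet v)

/-- A legal (closed neighborhood) sequence: distinct vertices, each dominating
a vertex not dominated by its predecessors. -/
def IsLegalSeq {V : Type*} (G : SimpleGraph V) (l : List V) : Prop :=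
  l.Nodup ∧ ∀ i : Fin l.length, ∃ u, u ∈ closedNbhd G (l.get i) ∧
    ∀ j : Fin l.length, (j : ℕ) < (i : ℕ) → u ∉ closedNbhd G (l.get j)

/-- A dominating sequence: a legal sequence whose vertex set dominates the graph. -/
def IsDomSeq {V : Type*} (G : SimpleGraph V) (l : List V) : Prop :=
  IsLegalSeq G l ∧ ∀ v : V, ∃ u ∈ l, v ∈ closedNbhd G u

/-- The Grundy domination number: maximum length of a dominating sequence. -/
noncomputable def grundyDomNum {V : Type*} (G : SimpleGraph V) : ℕ :=
  sSup {n | ∃ l : List V, IsDomSeq G l ∧ l.length = n}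

/-- A legal open neighborhood sequence. -/
def IsLegalOpenSeq {V : Type*} (G : SimpleGraph V) (l : List V) : Prop :=
  l.Nodup ∧ ∀ i : Fin l.length, ∃ u, u ∈ G.neighborSet (l.get i) ∧
    ∀ j : Fin l.length, (j : ℕ) < (i : ℕ) → u ∉ G.neighborSet (l.get j)

/-- A total dominating sequence. -/
def IsTotalDomSeq {V : Type*} (G : SimpleGraph V) (l : List V) : Prop :=
  IsLegalOpenSeq G l ∧ ∀ v : V, ∃ u ∈ l, v ∈ G.neighborSet u

/-- The Grundy total domination number. -/
noncomputable def grundyTotalDomNum {V : Type*} (G : SimpleGraph V) : ℕ :=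
  sSup {n | ∃ l : List V, IsTotalDomSeq G l ∧ l.length = n}

/-- The edge clique cover number: minimum size of a family of cliques covering all edges. -/
noncomputable def edgeCliqueCoverNum {V : Type*} (G : SimpleGraph V) : ℕ :=
  sInf {n | ∃ C : Finset (Set V), C.card = n ∧ (∀ Q ∈ C, G.IsClique Q) ∧
    ∀ u v : V, G.Adj u v → ∃ Q ∈ C, u ∈ Q ∧ v ∈ Q}

/-- The independence number. -/
noncomputable def indepNum {V : Type*} (G : SimpleGraph V) : ℕ :=
  sSup {n | ∃ s : Finset V, (s : Set V).Pairwise (fun u v => ¬ G.Adj u v) ∧ s.card = n}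

/-- The lexicographic product of simple graphs. -/
def lexProd {V W : Type*} (G : SimpleGraph V) (H : SimpleGraph W) : SimpleGraph (V × W) where
  Adj x y := G.Adj x.1 y.1 ∨ (x.1 = y.1 ∧ H.Adj x.2 y.2)
  symm := ⟨by
    rintro x y (h | ⟨e, h⟩)
    · exact Or.inl h.symm
    · exact Or.inr ⟨e.symm, h.symm⟩⟩
  loopless := ⟨by
    rintro x (h | ⟨_, h⟩)
    · exact G.irrefl h
    · exact H.irrefl h⟩

/-- The strong product of simple graphs. -/
def strongProd {V W : Type*} (G : SimpleGraph V) (H : SimpleGraph W) : SimpleGraph (V × W) where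
  Adj x y := x ≠ y ∧ (x.1 = y.1 ∨ G.Adj x.1 y.1) ∧ (x.2 = y.2 ∨ H.Adj x.2 y.2)
  symm := ⟨by
    rintro x y ⟨hne, h1, h2⟩
    refine ⟨hne.symm, ?_, ?_⟩
    · rcases h1 with h | h
      · exact Or.inl h.symm
      · exact Or.inr h.symm
    · rcases h2 with h | h
      · exact Or.inl h.symm
      · exact Or.inr h.symm⟩
  loopless := ⟨fun x h => h.1 rfl⟩

/-- The direct (tensor) product of simple graphs. -/
def directProd {V W : Type*} (G : SimpleGraph V) (H : SimpleGraph W) : SimpleGraph (V × W) where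
  Adj x y := G.Adj x.1 y.1 ∧ H.Adj x.2 y.2
  symm := ⟨fun _ _ h => ⟨h.1.symm, h.2.symm⟩⟩
  loopless := ⟨fun x h => G.irrefl h.1⟩

/-- The boundary of a set of vertices. -/
def boundarySet {V : Type*} (G : SimpleGraph V) (S : Set V) : Set V :=
  {u | u ∉ S ∧ ∃ s ∈ S, G.Adj u s}

/-- `aVal G l` is the number of entries of `l` not adjacent to any earlier entry. -/
def aVal {V : Type*} (G : SimpleGraph V) [DecidableRel G.Adj] (l : List V) : ℕ :=
  (Finset.univ.filter (fun i : Fin l.length =>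
    ∀ j : Fin l.length, (j : ℕ) < (i : ℕ) → ¬ G.Adj (l.get j) (l.get i))).card

/-!
Fix a legal sequence of `C_k ∘ H` with a footprint for each vertex. A vertex is local if its
footprint lies in its own fiber; otherwise it lies in a neighbouring fiber, which the vertex
dominates entirely. Hence a non-local vertex comes first in its fiber, and the footprints in a
fiber `c` have distinct `H`-coordinates; if `c` contains a local vertex, all of them except the
footprint of the first vertex of `c` avoid the closed neighbourhood of that vertex. So the
footprints in `c` together with a non-local vertex of `c` number at most `|V(H)| - δ(H) = l - 2`,
and the length is at most `h (l - 2) + q`, where `h` counts the fibers containing a local vertex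
and `q` the non-local vertices whose fiber and footprint fiber contain none.

Between two consecutive fibers with a local vertex lies a fiber that is not the fiber of one of
these `q` vertices: otherwise, in the chain of vertices from one local vertex to the next, each
precedes the one whose fiber is adjacent to its footprint fiber, which fails for the last of them.
Hence `2h + q ≤ k`, and the length is at most `(k / 2) (l - 2) + k % 2`. Conversely, legal
sequences of `C_l` of length `l - 2` placed in the fibers `0, 2, 4, …` (for odd `k`: in `0`, then
a vertex of fiber `1` with footprint in fiber `2`, then `3, 5, …, k - 2`) attain this bound, and
every legal sequence extends to a dominating one.
-/

section LegalSequences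

variable {V : Type*} (G : SimpleGraph V)

def dominatedBy (L : List V) : Set V := {v | ∃ x ∈ L, v ∈ closedNbhd G x}

def IsLegalAfter : Set V → List V → Prop
  | _, [] => True
  | D, v :: L => ¬ closedNbhd G v ⊆ D ∧ IsLegalAfter (D ∪ closedNbhd G v) L

variable {G}

theorem mem_closedNbhd_self (v : V) : v ∈ closedNbhd G v := Set.mem_insert v _

theorem dominatedBy_cons (v : V) (L : List V) :
    dominatedBy G (v :: L) = closedNbhd G v ∪ dominatedBy G L := by
  ext; simp [dominatedBy]

theorem isLegalAfter_append {D : Set V} {A B : List V} :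
    IsLegalAfter G D (A ++ B) ↔ IsLegalAfter G D A ∧ IsLegalAfter G (D ∪ dominatedBy G A) B := by
  induction A generalizing D with
  | nil => simp [IsLegalAfter, dominatedBy]
  | cons v A ih =>
    simp only [List.cons_append, IsLegalAfter, ih, dominatedBy_cons, ← Set.union_assoc, and_assoc]

theorem isLegalAfter_append_singleton {D : Set V} {L : List V} {v : V} :
    IsLegalAfter G D (L ++ [v]) ↔
      IsLegalAfter G D L ∧ ∃ u ∈ closedNbhd G v, u ∉ D ∧ u ∉ dominatedBy G L := by
  simp [isLegalAfter_append, IsLegalAfter, Set.not_subset]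

theorem isLegalAfter_iff_forall {D : Set V} {L : List V} :
    IsLegalAfter G D L ↔ ∀ i : Fin L.length, ∃ u ∈ closedNbhd G (L.get i), u ∉ D ∧
      ∀ j : Fin L.length, (j : ℕ) < i → u ∉ closedNbhd G (L.get j) := by
  induction L generalizing D with
  | nil => simp [IsLegalAfter]
  | cons v L ih =>
    simp only [IsLegalAfter, ih, List.length_cons, Fin.forall_fin_succ, Set.not_subset]
    simp [Set.mem_union, not_or, and_assoc]

theorem isLegalSeq_iff_isLegalAfter {L : List V} : IsLegalSeq G L ↔ IsLegalAfter G ∅ L := by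
  rw [isLegalAfter_iff_forall, IsLegalSeq]
  refine ⟨fun h i => by simpa using h.2 i, fun h => ⟨?_, fun i => by simpa using h i⟩⟩
  refine List.nodup_iff_injective_get.mpr fun i j hij => ?_
  by_contra hne
  wlog hlt : j < i generalizing i j
  · exact this j i hij.symm (Ne.symm hne) (lt_of_le_of_ne (not_lt.mp hlt) hne)
  obtain ⟨u, hu, -, hfresh⟩ := h i
  exact hfresh j hlt (hij ▸ hu)

theorem IsLegalSeq.exists_isDomSeq [Fintype V] {L : List V} (hL : IsLegalSeq G L) :
    ∃ L', IsDomSeq G L' ∧ L.length ≤ L'.length := by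
  by_cases hdom : ∀ v, ∃ u ∈ L, v ∈ closedNbhd G u
  · exact ⟨L, ⟨hL, hdom⟩, le_rfl⟩
  push Not at hdom
  obtain ⟨v, hv⟩ := hdom
  have hLv : IsLegalSeq G (L ++ [v]) := by
    rw [isLegalSeq_iff_isLegalAfter, isLegalAfter_append_singleton] at *
    exact ⟨hL, v, mem_closedNbhd_self v, id, fun ⟨x, hx, hvx⟩ => hv x hx hvx⟩
  have hcard : (L ++ [v]).length ≤ Fintype.card V := hLv.1.length_le_card
  obtain ⟨L', hL', hlen⟩ := hLv.exists_isDomSeq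
  exact ⟨L', hL', by simp at hlen; omega⟩
termination_by Fintype.card V - L.length
decreasing_by simp only [List.length_append, List.length_singleton] at hcard ⊢; omega

theorem grundyDomNum_eq_of_isLegalSeq [Fintype V] {N : ℕ}
    (hle : ∀ L, IsLegalSeq G L → L.length ≤ N) (hex : ∃ L, IsLegalSeq G L ∧ N ≤ L.length) :
    grundyDomNum G = N := by
  obtain ⟨L, hL, hNL⟩ := hex
  obtain ⟨L', hL', hLL'⟩ := hL.exists_isDomSeq
  refine IsGreatest.csSup_eq ⟨⟨L', hL', ?_⟩, ?_⟩
  · exact le_antisymm (hle L' hL'.1) (hNL.trans hLL')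
  · rintro _ ⟨L'', hL'', rfl⟩
    exact hle L'' hL''.1

end LegalSequences

section LexProd

variable {V W : Type*} {G : SimpleGraph V} {H : SimpleGraph W}

theorem mem_closedNbhd_lexProd {x y : V × W} :
    y ∈ closedNbhd (lexProd G H) x ↔ G.Adj x.1 y.1 ∨ (x.1 = y.1 ∧ y.2 ∈ closedNbhd H x.2) := by
  simp only [closedNbhd, Set.mem_insert_iff, mem_neighborSet, Prod.ext_iff]
  change _ ∨ (G.Adj _ _ ∨ _) ↔ _
  constructor
  · rintro (⟨h1, h2⟩ | h | ⟨h1, h2⟩)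
    · exact Or.inr ⟨h1.symm, Or.inl h2⟩
    · exact Or.inl h
    · exact Or.inr ⟨h1, Or.inr h2⟩
  · rintro (h | ⟨h1, h2 | h2⟩)
    · exact Or.inr (Or.inl h)
    · exact Or.inl ⟨h1.symm, h2⟩
    · exact Or.inr (Or.inr ⟨h1, h2⟩)

theorem fst_mem_closedNbhd_of_mem_closedNbhd_lexProd {x y : V × W}
    (h : y ∈ closedNbhd (lexProd G H) x) : y.1 ∈ closedNbhd G x.1 := by
  rcases mem_closedNbhd_lexProd.mp h with h | ⟨h, -⟩
  · exact Or.inr h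
  · exact Or.inl h.symm

theorem isLegalAfter_map_mk {c : V} {M : List W} {D : Set (V × W)} {D' : Set W}
    (hD : ∀ w, (c, w) ∈ D → w ∈ D') (hM : IsLegalAfter H D' M) :
    IsLegalAfter (lexProd G H) D (M.map (c, ·)) := by
  induction M generalizing D D' with
  | nil => trivial
  | cons m M ih =>
    obtain ⟨hm, hM⟩ := hM
    obtain ⟨u, hu, huD⟩ := Set.not_subset.mp hm
    refine ⟨Set.not_subset.mpr ⟨(c, u), mem_closedNbhd_lexProd.mpr (Or.inr ⟨rfl, hu⟩),
      fun h => huD (hD u h)⟩, ih ?_ hM⟩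
    rintro w (h | h)
    · exact Or.inl (hD w h)
    · rcases mem_closedNbhd_lexProd.mp h with h | ⟨-, h⟩
      · exact absurd h (G.irrefl)
      · exact Or.inr h

theorem fst_mem_closedNbhd_of_mem_dominatedBy_map_mk {c : V} {M : List W} {y : V × W}
    (h : y ∈ dominatedBy (lexProd G H) (M.map (c, ·))) : y.1 ∈ closedNbhd G c := by
  obtain ⟨x, hx, hy⟩ := h
  obtain ⟨w, -, rfl⟩ := List.mem_map.mp hx
  exact fst_mem_closedNbhd_of_mem_closedNbhd_lexProd hy

theorem isLegalAfter_flatMap_map_mk {cs : List V} {M : List W} {D : Set (V × W)}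
    (hcs : cs.Pairwise fun c c' => c' ∉ closedNbhd G c) (hD : ∀ c ∈ cs, ∀ w, (c, w) ∉ D)
    (hM : IsLegalAfter H ∅ M) :
    IsLegalAfter (lexProd G H) D (cs.flatMap fun c => M.map (c, ·)) := by
  induction cs generalizing D with
  | nil => trivial
  | cons c cs ih =>
    obtain ⟨hc, hcs⟩ := List.pairwise_cons.mp hcs
    rw [List.flatMap_cons, isLegalAfter_append]
    refine ⟨isLegalAfter_map_mk (fun w h => hD c List.mem_cons_self w h) hM, ih hcs ?_⟩
    rintro c' hc' w (h | h)
    · exact hD c' (List.mem_cons_of_mem c hc') w h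
    · exact hc c' hc' (fst_mem_closedNbhd_of_mem_dominatedBy_map_mk h)

theorem length_flatMap_map_mk (cs : List V) (M : List W) :
    (cs.flatMap fun c => M.map (c, ·)).length = cs.length * M.length := by
  simp [List.length_flatMap, List.sum_replicate]

end LexProd

structure FootprintSeq {V : Type*} (G : SimpleGraph V) (n : ℕ) where
  vtx : Fin n → V
  foot : Fin n → V
  foot_mem : ∀ i, foot i ∈ closedNbhd G (vtx i)
  foot_fresh : ∀ {i j}, j < i → foot i ∉ closedNbhd G (vtx j)

theorem IsLegalSeq.nonempty_footprintSeq {V : Type*} {G : SimpleGraph V} {L : List V}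
    (hL : IsLegalSeq G L) : Nonempty (FootprintSeq G L.length) := by
  choose u hu hfresh using hL.2
  exact ⟨⟨L.get, u, hu, fun hji => hfresh _ _ hji⟩⟩

namespace FootprintSeq

open Finset

variable {V W : Type*} {G : SimpleGraph V} {H : SimpleGraph W} {n : ℕ}
  (F : FootprintSeq (lexProd G H) n)

def fiber (i : Fin n) : V := (F.vtx i).1

def footFiber (i : Fin n) : V := (F.foot i).1

def IsLocal (i : Fin n) : Prop := F.footFiber i = F.fiber i

variable {F}

theorem adj_fiber_footFiber {i : Fin n} (h : ¬F.IsLocal i) : G.Adj (F.fiber i) (F.footFiber i) := by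
  rcases mem_closedNbhd_lexProd.mp (F.foot_mem i) with h' | ⟨h', -⟩
  · exact h'
  · exact absurd h'.symm h

theorem foot_snd_mem {i : Fin n} (h : F.IsLocal i) : (F.foot i).2 ∈ closedNbhd H (F.vtx i).2 := by
  rcases mem_closedNbhd_lexProd.mp (F.foot_mem i) with h' | ⟨-, h'⟩
  · have h'' : G.Adj (F.fiber i) (F.footFiber i) := h'
    exact absurd (h ▸ h'') G.irrefl
  · exact h'

theorem le_of_adj {i j : Fin n} (h : G.Adj (F.fiber j) (F.footFiber i)) : i ≤ j :=
  not_lt.mp fun hji => F.foot_fresh hji (mem_closedNbhd_lexProd.mpr (Or.inl h))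

theorem lt_of_adj {i j : Fin n} (h : G.Adj (F.fiber j) (F.footFiber i))
    (hne : F.fiber i ≠ F.fiber j) : i < j :=
  lt_of_le_of_ne (le_of_adj h) fun hij => hne (hij ▸ rfl)

theorem foot_snd_notMem {i j : Fin n} (hji : j < i) (h : F.fiber j = F.footFiber i) :
    (F.foot i).2 ∉ closedNbhd H (F.vtx j).2 :=
  fun h' => F.foot_fresh hji (mem_closedNbhd_lexProd.mpr (Or.inr ⟨h, h'⟩))

theorem le_of_fiber_eq {a j : Fin n} (ha : ¬F.IsLocal a) (h : F.fiber j = F.fiber a) : a ≤ j :=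
  le_of_adj (h ▸ adj_fiber_footFiber ha)

theorem le_of_footFiber_eq {i r : Fin n} (hr : ¬F.IsLocal r) (h : F.footFiber i = F.footFiber r) :
    i ≤ r :=
  le_of_adj (h ▸ adj_fiber_footFiber hr)

theorem injOn_fiber : Set.InjOn F.fiber {a | ¬F.IsLocal a} := fun _ ha _ ha' h =>
  le_antisymm (le_of_fiber_eq ha h.symm) (le_of_fiber_eq ha' h)

variable (F)

open Classical in
noncomputable def localFibers : Finset V := (univ.filter F.IsLocal).image F.fiber

open Classical in
noncomputable def footIn (c : V) : Finset (Fin n) := univ.filter (F.footFiber · = c)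

open Classical in
noncomputable def jumpsFrom (c : V) : Finset (Fin n) :=
  univ.filter fun a => ¬F.IsLocal a ∧ F.fiber a = c

open Classical in
noncomputable def freeJumps : Finset (Fin n) :=
  univ.filter fun a => ¬F.IsLocal a ∧ F.fiber a ∉ F.localFibers ∧ F.footFiber a ∉ F.localFibers

variable {F}

theorem mem_localFibers {c : V} : c ∈ F.localFibers ↔ ∃ i, F.IsLocal i ∧ F.fiber i = c := by
  simp [localFibers]

theorem mem_footIn {c : V} {i : Fin n} : i ∈ F.footIn c ↔ F.footFiber i = c := by
  simp [footIn]

theorem mem_jumpsFrom {c : V} {a : Fin n} : a ∈ F.jumpsFrom c ↔ ¬F.IsLocal a ∧ F.fiber a = c := by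
  simp [jumpsFrom]

theorem mem_freeJumps {a : Fin n} : a ∈ F.freeJumps ↔
    ¬F.IsLocal a ∧ F.fiber a ∉ F.localFibers ∧ F.footFiber a ∉ F.localFibers := by
  simp [freeJumps]

theorem disjoint_footIn_jumpsFrom (c : V) : Disjoint (F.footIn c) (F.jumpsFrom c) :=
  disjoint_left.mpr fun _ hi hi' =>
    (mem_jumpsFrom.mp hi').1 ((mem_footIn.mp hi).trans (mem_jumpsFrom.mp hi').2.symm)

theorem injOn_foot_snd_footIn (c : V) : Set.InjOn (fun i => (F.foot i).2) (F.footIn c) := by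
  have hne : ∀ i ∈ F.footIn c, ∀ i' ∈ F.footIn c, i < i' → (F.foot i).2 ≠ (F.foot i').2 := by
    intro i hi i' hi' hlt h
    rw [mem_footIn] at hi hi'
    by_cases hloc : F.IsLocal i
    · have hmem : (F.foot i).2 ∈ closedNbhd H (F.vtx i).2 := foot_snd_mem hloc
      exact foot_snd_notMem hlt (hloc.symm.trans (hi.trans hi'.symm)) (h ▸ hmem)
    · exact absurd (le_of_footFiber_eq hloc (hi'.trans hi.symm)) (not_le.mpr hlt)
  intro i hi i' hi' h
  rcases lt_trichotomy i i' with hlt | heq | hlt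
  · exact absurd h (hne i hi i' hi' hlt)
  · exact heq
  · exact absurd h.symm (hne i' hi' i hi hlt)

theorem card_footIn_add_card_jumpsFrom_le [Finite W] {m : ℕ}
    (hH : ∀ w, (closedNbhd H w)ᶜ.ncard < m) {c : V} (hc : c ∈ F.localFibers) :
    #(F.footIn c) + #(F.jumpsFrom c) ≤ m := by
  classical
  obtain ⟨b₀, hb₀, hb₀c⟩ := mem_localFibers.mp hc
  obtain ⟨j₀, hj₀, hmin⟩ :=
    (univ.filter (F.fiber · = c)).exists_min_image id ⟨b₀, by simpa using hb₀c⟩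
  simp only [mem_filter, mem_univ, true_and, id] at hj₀ hmin
  set E := F.footIn c ∪ F.jumpsFrom c
  -- `j₀` is the first vertex of fiber `c`; a non-local vertex with footprint in `c` comes after
  -- the local vertex `b₀`, and a non-local vertex of fiber `c` must be `j₀` itself.
  have hlate : ∀ i ∈ E.erase j₀, j₀ < i ∧ F.footFiber i = c := by
    intro i hi
    obtain ⟨hne, hi⟩ := mem_erase.mp hi
    rcases mem_union.mp hi with hi | hi
    · rw [mem_footIn] at hi
      refine ⟨lt_of_le_of_ne ?_ (Ne.symm hne), hi⟩
      by_cases hloc : F.IsLocal i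
      · exact hmin i (hloc.symm.trans hi)
      · exact (hmin b₀ hb₀c).trans (le_of_footFiber_eq hloc (hb₀.trans (hb₀c.trans hi.symm)))
    · obtain ⟨hloc, hi⟩ := mem_jumpsFrom.mp hi
      exact absurd (le_antisymm (le_of_fiber_eq hloc (hj₀.trans hi.symm)) (hmin i hi)) hne
  have hmaps : ∀ i ∈ (E.erase j₀ : Set (Fin n)),
      (F.foot i).2 ∈ (closedNbhd H (F.vtx j₀).2)ᶜ := fun i hi =>
    foot_snd_notMem (hlate i hi).1 (hj₀.trans (hlate i hi).2.symm)
  calc #(F.footIn c) + #(F.jumpsFrom c) = #E :=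
        (card_union_of_disjoint (disjoint_footIn_jumpsFrom c)).symm
    _ ≤ #(E.erase j₀) + 1 := Nat.le_add_of_sub_le pred_card_le_card_erase
    _ ≤ (closedNbhd H (F.vtx j₀).2)ᶜ.ncard + 1 := by
      rw [← Set.ncard_coe_finset]
      refine Nat.add_le_add_right (Set.ncard_le_ncard_of_injOn _ hmaps ?_) 1
      exact (injOn_foot_snd_footIn c).mono fun i hi => mem_footIn.mpr (hlate i hi).2
    _ ≤ m := hH _

theorem le_card_localFibers_mul_add [Finite W] {m : ℕ}
    (hH : ∀ w, (closedNbhd H w)ᶜ.ncard < m) :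
    n ≤ #F.localFibers * m + #F.freeJumps := by
  classical
  have hcover : (univ : Finset (Fin n)) ⊆ F.localFibers.biUnion F.footIn ∪
      F.localFibers.biUnion F.jumpsFrom ∪ F.freeJumps := by
    intro i _
    simp only [mem_union, mem_biUnion, mem_footIn, mem_jumpsFrom, mem_freeJumps]
    by_cases hloc : F.IsLocal i
    · exact Or.inl (Or.inl ⟨F.fiber i, mem_localFibers.mpr ⟨i, hloc, rfl⟩, hloc⟩)
    by_cases h₁ : F.fiber i ∈ F.localFibers
    · exact Or.inl (Or.inr ⟨_, h₁, hloc, rfl⟩)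
    by_cases h₂ : F.footFiber i ∈ F.localFibers
    · exact Or.inl (Or.inl ⟨_, h₂, rfl⟩)
    exact Or.inr ⟨hloc, h₁, h₂⟩
  calc n = #(univ : Finset (Fin n)) := (card_fin n).symm
    _ ≤ ∑ c ∈ F.localFibers, #(F.footIn c) + ∑ c ∈ F.localFibers, #(F.jumpsFrom c) +
        #F.freeJumps :=
      (card_le_card hcover).trans <| (card_union_le _ _).trans <|
        Nat.add_le_add_right ((card_union_le _ _).trans
          (add_le_add card_biUnion_le card_biUnion_le)) _
    _ ≤ ∑ _c ∈ F.localFibers, m + #F.freeJumps := by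
      rw [← sum_add_distrib]
      gcongr with c hc
      exact card_footIn_add_card_jumpsFrom_le hH hc
    _ = #F.localFibers * m + #F.freeJumps := by rw [sum_const, smul_eq_mul]

end FootprintSeq

section Cycle

open Finset
open scoped Fin.NatCast Fin.CommRing

variable {k : ℕ} [NeZero k]

theorem cycleGraph_adj_iff (hk : 2 ≤ k) {a b : Fin k} :
    (cycleGraph k).Adj a b ↔ b = a + 1 ∨ b = a - 1 := by
  obtain ⟨n, rfl⟩ : ∃ n, k = n + 2 := ⟨k - 2, by omega⟩
  rw [← mem_neighborSet, cycleGraph_neighborSet]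
  simp [or_comm]

theorem cycleGraph_adj_add_one (hk : 2 ≤ k) (a : Fin k) : (cycleGraph k).Adj a (a + 1) :=
  (cycleGraph_adj_iff hk).mpr (Or.inl rfl)

theorem Fin.val_add_one_eq_ite (hk : 2 ≤ k) (a : Fin k) :
    (a + 1).val = if a.val + 1 = k then 0 else a.val + 1 := by
  rw [Fin.val_add, Fin.val_one', Nat.mod_eq_of_lt (by omega : 1 < k)]
  split_ifs with h
  · rw [h, Nat.mod_self]
  · exact Nat.mod_eq_of_lt (by omega)

theorem cycleGraph_adj_iff_val (hk : 2 ≤ k) {a b : Fin k} :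
    (cycleGraph k).Adj a b ↔ a.val + 1 = b.val ∨ b.val + 1 = a.val ∨
      (a.val + 1 = k ∧ b.val = 0) ∨ (b.val + 1 = k ∧ a.val = 0) := by
  have key : ∀ x y : Fin k, x = y + 1 ↔ y.val + 1 = x.val ∨ (y.val + 1 = k ∧ x.val = 0) := by
    intro x y
    rw [Fin.ext_iff, Fin.val_add_one_eq_ite hk]
    have := x.isLt
    split_ifs <;> omega
  rw [cycleGraph_adj_iff hk, eq_sub_iff_add_eq, @eq_comm _ (b + 1), key, key]
  omega

theorem Fin.add_one_ne_self (hk : 2 ≤ k) (a : Fin k) : a + 1 ≠ a := by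
  rw [Ne, Fin.ext_iff, Fin.val_add_one_eq_ite hk]
  split_ifs <;> omega

theorem Fin.add_one_add_one_ne_self (hk : 3 ≤ k) (a : Fin k) : a + 1 + 1 ≠ a := by
  rw [Ne, Fin.ext_iff, Fin.val_add_one_eq_ite (by omega), Fin.val_add_one_eq_ite (by omega)]
  have := a.isLt
  split_ifs <;> omega

theorem ncard_compl_closedNbhd_cycleGraph (hk : 3 ≤ k) (a : Fin k) :
    (closedNbhd (cycleGraph k) a)ᶜ.ncard = k - 3 := by
  obtain ⟨n, rfl⟩ : ∃ n, k = n + 2 := ⟨k - 2, by omega⟩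
  have hsub : a - 1 ≠ a + 1 := fun h =>
    Fin.add_one_add_one_ne_self hk (a - 1) (by rw [show a - 1 + 1 + 1 = a + 1 by ring, h])
  have hnot : a ∉ ({a - 1, a + 1} : Set (Fin (n + 2))) := by
    rintro (h | h)
    · exact Fin.add_one_ne_self (by omega) (a - 1) (by rw [sub_add_cancel]; exact h)
    · exact Fin.add_one_ne_self (by omega) a h.symm
  rw [Set.ncard_compl, Nat.card_eq_fintype_card, Fintype.card_fin, closedNbhd,
    cycleGraph_neighborSet, Set.ncard_insert_of_notMem hnot, Set.ncard_pair hsub]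

theorem cycleGraph_adj_natCast (hk : 2 ≤ k) {x y : ℕ} (hx : x < k) (hy : y < k) :
    (cycleGraph k).Adj (x : Fin k) (y : Fin k) ↔
      x + 1 = y ∨ y + 1 = x ∨ (x + 1 = k ∧ y = 0) ∨ (y + 1 = k ∧ x = 0) := by
  rw [cycleGraph_adj_iff_val hk, Fin.val_cast_of_lt hx, Fin.val_cast_of_lt hy]

theorem Fin.natCast_eq_natCast_iff {x y : ℕ} (hx : x < k) (hy : y < k) :
    (x : Fin k) = (y : Fin k) ↔ x = y := by
  rw [Fin.ext_iff, Fin.val_cast_of_lt hx, Fin.val_cast_of_lt hy]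

theorem mem_closedNbhd_cycleGraph_natCast (hk : 2 ≤ k) {x y : ℕ} (hx : x < k) (hy : y < k) :
    (y : Fin k) ∈ closedNbhd (cycleGraph k) (x : Fin k) ↔
      y = x ∨ x + 1 = y ∨ y + 1 = x ∨ (x + 1 = k ∧ y = 0) ∨ (y + 1 = k ∧ x = 0) := by
  rw [closedNbhd, Set.mem_insert_iff, mem_neighborSet, Fin.natCast_eq_natCast_iff hy hx,
    cycleGraph_adj_natCast hk hx hy]

theorem isLegalAfter_cycleGraph_range {m : ℕ} (hm : m + 2 ≤ k) :
    IsLegalAfter (cycleGraph k) ∅ ((List.range m).map fun i : ℕ => (i : Fin k)) := by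
  induction m with
  | zero => trivial
  | succ m ih =>
    rw [List.range_succ, List.map_append, List.map_singleton, isLegalAfter_append_singleton]
    refine ⟨ih (by omega), ((m + 1 : ℕ) : Fin k), ?_, id, ?_⟩
    · rw [mem_closedNbhd_cycleGraph_natCast (by omega) (by omega) (by omega)]
      omega
    · rintro ⟨_, hx, hu⟩
      obtain ⟨i, hi, rfl⟩ := List.mem_map.mp hx
      rw [List.mem_range] at hi
      rw [mem_closedNbhd_cycleGraph_natCast (by omega) (by omega) (by omega)] at hu
      omega

theorem exists_exit_of_notMem {S : Finset (Fin k)} {b : Fin k} (hb : b ∉ S) :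
    ∃ j : ℕ, 0 < j ∧ b + j ∉ S ∧ ∀ t : ℕ, 0 < t → t < j → b + t ∈ S := by
  classical
  have hex : ∃ j : ℕ, 0 < j ∧ b + j ∉ S :=
    ⟨k, Nat.pos_of_neZero k, by rwa [Fin.natCast_self, add_zero]⟩
  refine ⟨Nat.find hex, (Nat.find_spec hex).1, (Nat.find_spec hex).2, fun t ht htj => ?_⟩
  by_contra h
  exact Nat.find_min hex htj ⟨ht, h⟩

theorem two_mul_card_add_card_le_of_run {L S : Finset (Fin k)} (hLS : Disjoint L S)
    (hrun : ∀ b ∈ L, ∀ j : ℕ, 0 < j → (∀ t : ℕ, 0 < t → t < j → b + t ∈ S) → b + j ∉ L) :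
    2 * #L + #S ≤ k := by
  classical
  have hexit : ∀ b ∈ L, ∃ j : ℕ, 0 < j ∧ b + j ∉ S ∧ ∀ t : ℕ, 0 < t → t < j → b + t ∈ S :=
    fun b hb => exists_exit_of_notMem (disjoint_left.mp hLS hb)
  choose! J hJpos hJS hJrun using hexit
  -- `w b`, the first fiber after `b` outside `S`, lies outside `L ∪ S`; `w` is injective on `L`
  -- because the fibers strictly between `b` and `w b` lie in `S`.
  set w : Fin k → Fin k := fun b => b + (J b : ℕ)
  have hwL : ∀ b ∈ L, w b ∉ L := fun b hb => hrun b hb _ (hJpos b hb) (hJrun b hb)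
  have hwinj : Set.InjOn w L := by
    have key : ∀ b ∈ L, ∀ b' ∈ L, J b' ≤ J b → w b = w b' → b = b' := by
      intro b hb b' hb' hle h
      have hb'eq : b' = b + ((J b - J b' : ℕ) : Fin k) := by
        rw [Nat.cast_sub hle]
        exact (eq_sub_of_add_eq h.symm).trans (by ring)
      rcases Nat.eq_zero_or_pos (J b - J b') with h0 | h0
      · rwa [h0, Nat.cast_zero, add_zero, eq_comm] at hb'eq
      · have hlt : J b - J b' < J b := by have := hJpos b' hb'; omega
        exact absurd (hb'eq ▸ hJrun b hb _ h0 hlt) (disjoint_left.mp hLS hb')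
    intro b hb b' hb' h
    rcases le_total (J b') (J b) with hle | hle
    · exact key b hb b' hb' hle h
    · exact (key b' hb' b hb hle h.symm).symm
  have hdisj₁ : Disjoint L (L.image w) := disjoint_left.mpr fun x hx hx' => by
    obtain ⟨b, hb, rfl⟩ := mem_image.mp hx'
    exact hwL b hb hx
  have hdisj₂ : Disjoint (L ∪ L.image w) S := disjoint_union_left.mpr ⟨hLS,
    disjoint_left.mpr fun b hb => by
      obtain ⟨b', hb', rfl⟩ := mem_image.mp hb
      exact hJS b' hb'⟩
  calc 2 * #L + #S = #L + #(L.image w) + #S := by rw [card_image_of_injOn hwinj]; ring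
    _ = #(L ∪ L.image w ∪ S) := by
      rw [card_union_of_disjoint hdisj₂, card_union_of_disjoint hdisj₁]
    _ ≤ k := (card_le_univ _).trans (Fintype.card_fin k).le

end Cycle

namespace FootprintSeq

open Finset
open scoped Fin.NatCast Fin.CommRing

variable {k : ℕ} [NeZero k] {W : Type*} {H : SimpleGraph W} {n : ℕ}
  {F : FootprintSeq (lexProd (cycleGraph k) H) n}

/-- `E t` precedes any `E t'` whose fiber is adjacent to its footprint fiber: take `t' = 1` for
`t = 0`, `t' = j - 1` for `t = j`, and otherwise `t' = t ± 2`, since the footprint fiber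
`b + t ± 1` of the free jump `E t` is neither `b` nor `b + j`. -/
theorem exists_lt_of_run (hk : 3 ≤ k) {b : Fin k} {j : ℕ} (hj : 0 < j) {E : ℕ → Fin n}
    (hfiber : ∀ t ≤ j, F.fiber (E t) = b + t) (h₀ : F.IsLocal (E 0)) (hj' : F.IsLocal (E j))
    (hfree : ∀ t, 0 < t → t < j → E t ∈ F.freeJumps) {t : ℕ} (ht : t ≤ j) :
    ∃ t' ≤ j, E t < E t' := by
  have hsucc : ∀ s : ℕ, b + ((s + 1 : ℕ) : Fin k) = b + s + 1 := fun s => by push_cast; ring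
  have hadj := cycleGraph_adj_add_one (k := k) (by omega)
  have step : ∀ t' ≤ j, (cycleGraph k).Adj (b + t') (F.footFiber (E t)) → b + t ≠ b + t' →
      E t < E t' := fun t' ht' h hne =>
    lt_of_adj ((hfiber t' ht').symm ▸ h) ((hfiber t ht).symm ▸ (hfiber t' ht').symm ▸ hne)
  have hloc : ∀ t ≤ j, F.IsLocal (E t) → b + t ∈ F.localFibers := fun t ht h =>
    mem_localFibers.mpr ⟨E t, h, hfiber t ht⟩
  rcases Nat.eq_zero_or_pos t with rfl | ht₀
  · refine ⟨1, hj, step 1 hj ?_ ?_⟩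
    · rw [h₀, hfiber 0 ht, hsucc 0, Nat.cast_zero, add_zero]
      exact (hadj b).symm
    · rw [hsucc 0, Nat.cast_zero, add_zero]
      exact (Fin.add_one_ne_self (by omega) b).symm
  rcases lt_or_ge t j with htj | htj
  swap
  · obtain rfl : t = j := le_antisymm ht htj
    obtain ⟨s, rfl⟩ : ∃ s, t = s + 1 := ⟨t - 1, by omega⟩
    refine ⟨s, by omega, step s (by omega) ?_ ?_⟩
    · rw [hj', hfiber _ ht, hsucc]
      exact hadj _
    · rw [hsucc]
      exact Fin.add_one_ne_self (by omega) _
  obtain ⟨hnl, -, hfoot⟩ := mem_freeJumps.mp (hfree t ht₀ htj)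
  rcases (cycleGraph_adj_iff (by omega)).mp (adj_fiber_footFiber hnl) with h | h
  · have ht₁ : t + 1 ≠ j := fun h' => hfoot <| by
      rw [h, hfiber t ht, ← hsucc, h']
      exact hloc j le_rfl hj'
    refine ⟨t + 2, by omega, step (t + 2) (by omega) ?_ ?_⟩
    · rw [h, hfiber t ht, hsucc (t + 1), hsucc t]
      exact (hadj _).symm
    · rw [hsucc (t + 1), hsucc t]
      exact (Fin.add_one_add_one_ne_self hk _).symm
  · have ht₁ : t ≠ 1 := fun h' => hfoot <| by
      subst h'
      rw [h, hfiber 1 ht]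
      simpa using hloc 0 (Nat.zero_le _) h₀
    obtain ⟨r, rfl⟩ : ∃ r, t = r + 2 := ⟨t - 2, by omega⟩
    refine ⟨r, by omega, step r (by omega) ?_ ?_⟩
    · rw [h, hfiber _ ht, hsucc (r + 1), hsucc r, add_sub_cancel_right]
      exact hadj _
    · rw [hsucc (r + 1), hsucc r]
      exact Fin.add_one_add_one_ne_self hk _

theorem notMem_localFibers_of_run (hk : 3 ≤ k) {b : Fin k} (hb : b ∈ F.localFibers) {j : ℕ}
    (hj : 0 < j) (hrun : ∀ t : ℕ, 0 < t → t < j → b + t ∈ F.freeJumps.image F.fiber) :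
    b + j ∉ F.localFibers := by
  classical
  intro hbj
  obtain ⟨i₀, hi₀, hfi₀⟩ := mem_localFibers.mp hb
  obtain ⟨i₁, hi₁, hfi₁⟩ := mem_localFibers.mp hbj
  have hE : ∀ t : ℕ, ∃ e, t ≤ j → F.fiber e = b + t ∧ (t = 0 → F.IsLocal e) ∧
      (t = j → F.IsLocal e) ∧ (0 < t → t < j → e ∈ F.freeJumps) := by
    intro t
    rcases Nat.eq_zero_or_pos t with rfl | ht
    · exact ⟨i₀, fun _ => ⟨by simpa using hfi₀, fun _ => hi₀, fun _ => hi₀, by omega⟩⟩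
    rcases lt_or_ge t j with htj | htj
    · obtain ⟨e, he, hfe⟩ := mem_image.mp (hrun t ht htj)
      exact ⟨e, fun _ => ⟨hfe, by omega, by omega, fun _ _ => he⟩⟩
    · refine ⟨i₁, fun htj' => ?_⟩
      obtain rfl : t = j := le_antisymm htj' htj
      exact ⟨hfi₁, fun _ => hi₁, fun _ => hi₁, by omega⟩
  choose E hE using hE
  obtain ⟨t, ht, hmax⟩ := (range (j + 1)).exists_max_image E ⟨0, by simp⟩
  rw [mem_range] at ht
  obtain ⟨t', ht', hlt⟩ := exists_lt_of_run hk hj (fun t ht => (hE t ht).1)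
    ((hE 0 (Nat.zero_le _)).2.1 rfl) ((hE j le_rfl).2.2.1 rfl)
    (fun t ht₀ htj => (hE t htj.le).2.2.2 ht₀ htj) (Nat.lt_succ_iff.mp ht)
  exact absurd (hmax t' (mem_range.mpr (by omega))) (not_le.mpr hlt)

theorem two_mul_card_localFibers_add_card_freeJumps_le (hk : 3 ≤ k) :
    2 * #F.localFibers + #F.freeJumps ≤ k := by
  classical
  have hcard : #(F.freeJumps.image F.fiber) = #F.freeJumps :=
    card_image_of_injOn (injOn_fiber.mono fun a ha => (mem_freeJumps.mp ha).1)
  rw [← hcard]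
  refine two_mul_card_add_card_le_of_run (disjoint_right.mpr fun c hc => ?_)
    fun b hb j hj hrun => notMem_localFibers_of_run hk hb hj hrun
  obtain ⟨a, ha, rfl⟩ := mem_image.mp hc
  exact (mem_freeJumps.mp ha).2.1

theorem le_of_lexProd_cycleGraph (F : FootprintSeq (lexProd (cycleGraph k) H) n) (hk : 3 ≤ k)
    [Finite W] {m : ℕ} (hm : 2 ≤ m)
    (hH : ∀ w, (closedNbhd H w)ᶜ.ncard < m) : n ≤ k / 2 * m + k % 2 := by
  have h₁ := le_card_localFibers_mul_add (F := F) hH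
  have h₂ := two_mul_card_localFibers_add_card_freeJumps_le (F := F) hk
  obtain ⟨m, rfl⟩ : ∃ m', m = m' + 2 := ⟨m - 2, by omega⟩
  have h₃ : #F.localFibers * m ≤ k / 2 * m := Nat.mul_le_mul_right m (by omega)
  rw [mul_add] at h₁ ⊢
  omega

end FootprintSeq

section Constructions

open scoped Fin.NatCast

variable {k : ℕ} [NeZero k] {W : Type*} {H : SimpleGraph W}

theorem exists_isLegalSeq_lexProd_cycleGraph_of_even (hk : 2 ≤ k) (hke : k % 2 = 0)
    {M : List W} (hM : IsLegalAfter H ∅ M) :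
    ∃ L, IsLegalSeq (lexProd (cycleGraph k) H) L ∧ L.length = k / 2 * M.length := by
  set cs := (List.range (k / 2)).map fun i => ((2 * i : ℕ) : Fin k)
  refine ⟨cs.flatMap fun c => M.map (c, ·), ?_, by rw [length_flatMap_map_mk]; simp [cs]⟩
  refine isLegalSeq_iff_isLegalAfter.mpr (isLegalAfter_flatMap_map_mk ?_ (by simp) hM)
  refine List.pairwise_map.mpr (List.pairwise_lt_range.imp_of_mem fun hi hj hij => ?_)
  rw [List.mem_range] at hi hj
  rw [mem_closedNbhd_cycleGraph_natCast hk (by omega) (by omega)]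
  omega

theorem exists_isLegalSeq_lexProd_cycleGraph_of_odd [Nonempty W] (hk : 5 ≤ k)
    (hko : k % 2 = 1) {M : List W} (hM : IsLegalAfter H ∅ M) :
    ∃ L, IsLegalSeq (lexProd (cycleGraph k) H) L ∧ L.length = k / 2 * M.length + 1 := by
  obtain ⟨w⟩ := ‹Nonempty W›
  set cs := (List.range ((k - 3) / 2)).map fun i => ((2 * i + 3 : ℕ) : Fin k)
  have hN {x y : ℕ} (hx : x < k) (hy : y < k) := mem_closedNbhd_cycleGraph_natCast (by omega) hx hy
  refine ⟨M.map (((0 : ℕ) : Fin k), ·) ++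
    (((1 : ℕ) : Fin k), w) :: cs.flatMap fun c => M.map (c, ·), ?_, ?_⟩
  · rw [isLegalSeq_iff_isLegalAfter, isLegalAfter_append]
    refine ⟨isLegalAfter_map_mk (by simp) hM, ?_, isLegalAfter_flatMap_map_mk ?_ ?_ hM⟩
    · refine Set.not_subset.mpr ⟨(((2 : ℕ) : Fin k), w), mem_closedNbhd_lexProd.mpr
        (Or.inl ((cycleGraph_adj_natCast (by omega) (by omega) (by omega)).mpr (by omega))), ?_⟩
      rintro (h | h)
      · exact h
      · exact absurd (fst_mem_closedNbhd_of_mem_dominatedBy_map_mk h)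
          (by rw [hN (by omega) (by omega)]; omega)
    · refine List.pairwise_map.mpr (List.pairwise_lt_range.imp_of_mem fun hi hj hij => ?_)
      rw [List.mem_range] at hi hj
      rw [hN (by omega) (by omega)]
      omega
    · intro c hc w' h
      obtain ⟨i, hi, rfl⟩ := List.mem_map.mp hc
      rw [List.mem_range] at hi
      rcases h with (h | h) | h
      · exact h
      · exact absurd (fst_mem_closedNbhd_of_mem_dominatedBy_map_mk h)
          (by rw [hN (by omega) (by omega)]; omega)
      · exact absurd (fst_mem_closedNbhd_of_mem_closedNbhd_lexProd h)
          (by rw [hN (by omega) (by omega)]; omega)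
  · have : k / 2 = (k - 3) / 2 + 1 := by omega
    rw [List.length_append, List.length_cons, length_flatMap_map_mk, List.length_map,
      List.length_map, List.length_range, this]
    ring

end Constructions

theorem grundyDomNum_lexProd_cycleGraph {k l : ℕ} (hk : 3 < k) (hl : 3 < l) :
    grundyDomNum (lexProd (cycleGraph k) (cycleGraph l)) = k / 2 * (l - 2) + k % 2 := by
  have : NeZero k := ⟨by omega⟩
  have : NeZero l := ⟨by omega⟩
  refine grundyDomNum_eq_of_isLegalSeq (fun L hL => ?_) ?_
  · obtain ⟨F⟩ := hL.nonempty_footprintSeq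
    refine F.le_of_lexProd_cycleGraph (by omega) (by omega) fun w => ?_
    rw [ncard_compl_closedNbhd_cycleGraph (by omega)]
    omega
  have hM := isLegalAfter_cycleGraph_range (k := l) (m := l - 2) (by omega)
  rcases Nat.mod_two_eq_zero_or_one k with h | h
  · obtain ⟨L, hL, hlen⟩ := exists_isLegalSeq_lexProd_cycleGraph_of_even (by omega) h hM
    exact ⟨L, hL, by simp [hlen, h]⟩
  · obtain ⟨L, hL, hlen⟩ := exists_isLegalSeq_lexProd_cycleGraph_of_odd (by omega) h hM
    exact ⟨L, hL, by simp [hlen, h]⟩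

theorem stmt_12 (k l : ℕ) (hk : 3 < k) (hl : 3 < l) :
    (k % 2 = 0 →
      grundyDomNum (lexProd (cycleGraph k) (cycleGraph l)) = (k / 2) * (l - 2)) ∧
    (k % 2 = 1 →
      grundyDomNum (lexProd (cycleGraph k) (cycleGraph l)) = (k / 2) * (l - 2) + 1) := by
  rw [grundyDomNum_lexProd_cycleGraph hk hl]
  exact ⟨fun h => by rw [h, add_zero], fun h => by rw [h]⟩
end

section
/- For any graphs G and H without isolated vertices, γ_gr(G × H) ≥ max over dominating sequences D of G of a(D)·|V(H)| + γ^t_gr(H)·(|D̂| − a(D)), and symmetrically with G and H exchanged. -/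
open SimpleGraph

section Aux

lemma mem_closedNbhd_iff {V : Type*} {G : SimpleGraph V} {u v : V} :
    u ∈ closedNbhd G v ↔ u = v ∨ G.Adj v u := by
  simp [closedNbhd]

lemma directProd_adj {V W : Type*} {G : SimpleGraph V} {H : SimpleGraph W} {x y : V × W} :
    (directProd G H).Adj x y ↔ G.Adj x.1 y.1 ∧ H.Adj x.2 y.2 := Iff.rfl

lemma legal_append {V : Type*} (G : SimpleGraph V) {A B : List V}
    (hA : IsLegalSeq G A) (hnd : (A ++ B).Nodup)
    (hB : ∀ i : Fin B.length, ∃ u, u ∈ closedNbhd G (B.get i) ∧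
      (∀ a ∈ A, u ∉ closedNbhd G a) ∧
      ∀ j : Fin B.length, (j : ℕ) < (i : ℕ) → u ∉ closedNbhd G (B.get j)) :
    IsLegalSeq G (A ++ B) := by
  refine ⟨hnd, ?_⟩
  intro i
  rcases lt_or_ge (i : ℕ) A.length with hi | hi
  · obtain ⟨u, hu1, hu2⟩ := hA.2 ⟨i, hi⟩
    refine ⟨u, ?_, ?_⟩
    · simpa [List.get_eq_getElem, List.getElem_append_left hi] using hu1
    · intro j hj
      have hj' : (j : ℕ) < A.length := lt_of_lt_of_le hj (le_of_lt hi) |>.trans_le (le_refl _)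
      have := hu2 ⟨j, hj'⟩ hj
      simpa [List.get_eq_getElem, List.getElem_append_left hj'] using this
  · have hi2 : (i : ℕ) - A.length < B.length := by
      have := i.2; simp only [List.length_append] at this; omega
    obtain ⟨u, hu1, hu2, hu3⟩ := hB ⟨(i : ℕ) - A.length, hi2⟩
    refine ⟨u, ?_, ?_⟩
    · simpa [List.get_eq_getElem, List.getElem_append_right hi] using hu1
    · intro j hj
      rcases lt_or_ge (j : ℕ) A.length with hj' | hj'
      · have : (A ++ B).get j = A.get ⟨j, hj'⟩ := by
          simp [List.get_eq_getElem, List.getElem_append_left hj']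
        rw [this]
        exact hu2 _ (List.get_mem A ⟨_, hj'⟩)
      · have hj2 : (j : ℕ) - A.length < B.length := by
          have := j.2; simp only [List.length_append] at this; omega
        have : (A ++ B).get j = B.get ⟨(j : ℕ) - A.length, hj2⟩ := by
          simp [List.get_eq_getElem, List.getElem_append_right hj']
        rw [this]
        exact hu3 ⟨(j : ℕ) - A.length, hj2⟩ (by simp; omega)

lemma exists_max_totalDomSeq {W : Type*} [Fintype W] (H : SimpleGraph W)
    (hH : ∀ v : W, ∃ u : W, H.Adj v u) :
    ∃ t : List W, IsTotalDomSeq H t ∧ t.length = grundyTotalDomNum H := by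
  classical
  set S : Set ℕ := {n | ∃ l : List W, IsLegalOpenSeq H l ∧ l.length = n} with hS
  have hSne : S.Nonempty := ⟨0, [], ⟨List.nodup_nil, fun i => i.elim0⟩, rfl⟩
  have hSbdd : BddAbove S := by
    refine ⟨Fintype.card W, ?_⟩
    rintro n ⟨l, hl, rfl⟩
    exact hl.1.length_le_card
  obtain ⟨l, hl, hlen⟩ := Nat.sSup_mem hSne hSbdd
  have hdom : ∀ v : W, ∃ u ∈ l, v ∈ H.neighborSet u := by
    by_contra hcon
    push_neg at hcon
    obtain ⟨v, hv⟩ := hcon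
    obtain ⟨x, hx⟩ := hH v
    have hxl : x ∉ l := fun hmem => hv x hmem (by simpa using hx.symm)
    have hleg : IsLegalOpenSeq H (l ++ [x]) := by
      refine ⟨by simp [List.nodup_append, hl.1, hxl]; rintro a ha rfl; exact hxl ha, ?_⟩
      intro i
      rcases lt_or_ge (i : ℕ) l.length with hi | hi
      · obtain ⟨u, hu1, hu2⟩ := hl.2 ⟨i, hi⟩
        refine ⟨u, by simpa [List.get_eq_getElem, List.getElem_append_left hi] using hu1, ?_⟩
        intro j hj
        have hj' : (j : ℕ) < l.length := hj.trans hi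
        have := hu2 ⟨j, hj'⟩ hj
        simpa [List.get_eq_getElem, List.getElem_append_left hj'] using this
      · have hi' : (i : ℕ) = l.length := by
          have := i.2; simp only [List.length_append, List.length_singleton] at this; omega
        refine ⟨v, ?_, ?_⟩
        · have : (l ++ [x]).get i = x := by
            simp [List.get_eq_getElem, List.getElem_append_right hi, hi']
          rw [this]
          simpa using hx.symm
        · intro j hj
          have hj' : (j : ℕ) < l.length := by omega
          have : (l ++ [x]).get j = l.get ⟨j, hj'⟩ := by
            simp [List.get_eq_getElem, List.getElem_append_left hj']
          rw [this]
          exact hv _ (List.get_mem l ⟨_, hj'⟩)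
    have : l.length + 1 ∈ S := ⟨l ++ [x], hleg, by simp⟩
    have := le_csSup hSbdd this
    omega
  set T : Set ℕ := {n | ∃ l : List W, IsTotalDomSeq H l ∧ l.length = n} with hT
  have hTne : T.Nonempty := ⟨l.length, l, ⟨hl, hdom⟩, rfl⟩
  have hTbdd : BddAbove T := by
    refine ⟨Fintype.card W, ?_⟩
    rintro n ⟨l', hl', rfl⟩
    exact hl'.1.1.length_le_card
  obtain ⟨t, ht, htlen⟩ := Nat.sSup_mem hTne hTbdd
  exact ⟨t, ht, htlen⟩

def buildSeq {α : Type*} (blocks : ℕ → List α) : ℕ → List α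
  | 0 => []
  | n + 1 => buildSeq blocks n ++ blocks n

lemma mem_buildSeq {α : Type*} {blocks : ℕ → List α} {p : α} {n : ℕ} :
    p ∈ buildSeq blocks n ↔ ∃ m < n, p ∈ blocks m := by
  induction n with
  | zero => simp [buildSeq]
  | succ n ih =>
    simp only [buildSeq, List.mem_append, ih]
    constructor
    · rintro (⟨m, hm, hp⟩ | hp)
      · exact ⟨m, by omega, hp⟩
      · exact ⟨n, by omega, hp⟩
    · rintro ⟨m, hm, hp⟩
      rcases Nat.lt_succ_iff_lt_or_eq.1 hm with h | rfl
      · exact Or.inl ⟨m, h, hp⟩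
      · exact Or.inr hp

lemma length_buildSeq {α : Type*} (blocks : ℕ → List α) (n : ℕ) :
    (buildSeq blocks n).length = ∑ m ∈ Finset.range n, (blocks m).length := by
  induction n with
  | zero => simp [buildSeq]
  | succ n ih => simp [buildSeq, ih, Finset.sum_range_succ]

lemma core_construction {V W : Type*} [Fintype V] [Fintype W]
    (G : SimpleGraph V) (H : SimpleGraph W)
    [DecidableRel G.Adj] [DecidableRel H.Adj]
    (hH : ∀ v : W, ∃ u : W, H.Adj v u)
    (l : List V) (hl : IsDomSeq G l) (t : List W) (ht : IsTotalDomSeq H t) :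
    ∃ L : List (V × W), IsDomSeq (directProd G H) L ∧
      L.length = aVal G l * Fintype.card W + t.length * (l.length - aVal G l) := by
  classical
  set k := l.length with hk
  set typeA : Fin k → Prop := fun i =>
    ∀ j : Fin k, (j : ℕ) < (i : ℕ) → ¬ G.Adj (l.get j) (l.get i) with htypeA
  set B : ℕ → List (V × W) := fun n =>
    if h : n < k then
      ((if typeA ⟨n, h⟩ then (Finset.univ : Finset W).toList else t).map
        (fun w => (l.get ⟨n, h⟩, w)))
    else [] with hB
  -- first coordinate of members of blocks
  have fst_mem : ∀ {m : ℕ} {p : V × W}, p ∈ B m → ∃ h : m < k, p.1 = l.get ⟨m, h⟩ := by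
    intro m p hp
    simp only [hB] at hp
    split at hp
    · next h =>
      refine ⟨h, ?_⟩
      obtain ⟨w, _, rfl⟩ := List.mem_map.1 hp
      rfl
    · simp at hp
  -- nodup of prefixes
  have hnodup : ∀ n, (buildSeq B n).Nodup := by
    intro n
    induction n with
    | zero => simp [buildSeq]
    | succ n ih =>
      rw [buildSeq, List.nodup_append]
      refine ⟨ih, ?_, ?_⟩
      · simp only [hB]
        split
        · next h =>
          apply List.Nodup.map
          · intro a b hab
            simpa using hab
          · split
            · exact Finset.nodup_toList _
            · exact ht.1.1
        · simp
      · intro p hp p' hp' hpp'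
        subst hpp'
        obtain ⟨m, hm, hpm⟩ := mem_buildSeq.1 hp
        obtain ⟨hmk, h1⟩ := fst_mem hpm
        obtain ⟨hnk, h2⟩ := fst_mem hp'
        rw [h1] at h2
        have : m = n := by
          have := (List.Nodup.getElem_inj_iff hl.1.1).1 (by simpa [List.get_eq_getElem] using h2)
          exact this
        omega
    -- legality of prefixes
  have hlegal : ∀ n, n ≤ k → IsLegalSeq (directProd G H) (buildSeq B n) := by
    intro n hn
    induction n with
    | zero => exact ⟨by simp [buildSeq], fun i => by simp [buildSeq] at i; exact i.elim0⟩
    | succ n ih =>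
      have hnk : n < k := hn
      rw [buildSeq]
      refine legal_append _ (ih (le_of_lt hnk)) (by
        have := hnodup (n+1); rwa [buildSeq] at this) ?_
      -- witnesses for the block B n
      by_cases hA : typeA ⟨n, hnk⟩
      · -- type a block : all of W, witness is the element itself
        intro i
        have hBn : B n = (Finset.univ : Finset W).toList.map (fun w => (l.get ⟨n, hnk⟩, w)) := by
          simp only [hB]
          rw [dif_pos hnk, if_pos hA]
        refine ⟨(B n).get i, Or.inl rfl, ?_, ?_⟩
        · -- avoid earlier blocks
          intro a ha hmem
          obtain ⟨m, hm, ham⟩ := mem_buildSeq.1 ha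
          obtain ⟨hmk, hfst⟩ := fst_mem ham
          obtain ⟨hnk', hfst'⟩ := fst_mem (List.get_mem (B n) i)
          rcases mem_closedNbhd_iff.1 hmem with heq | hadj
          · have : (l.get ⟨n, hnk⟩ : V) = l.get ⟨m, hmk⟩ := by
              rw [← hfst', ← hfst, heq]
            have : n = m := (List.Nodup.getElem_inj_iff hl.1.1).1
              (by simpa [List.get_eq_getElem] using this)
            omega
          · -- adjacency in directProd
            have hGadj : G.Adj a.1 ((B n).get i).1 := hadj.1
            rw [hfst, hfst'] at hGadj
            exact hA ⟨m, hmk⟩ (by simpa using hm) hGadj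
        · -- avoid earlier in same block
          intro j hj hmem
          rcases mem_closedNbhd_iff.1 hmem with heq | hadj
          · -- equal elements at different positions: contradiction with nodup
            have hnd : (B n).Nodup := by
              rw [hBn]
              exact List.Nodup.map (fun a b hab => by simpa using hab) (Finset.nodup_toList _)
            have : (i : ℕ) = (j : ℕ) := (List.Nodup.getElem_inj_iff hnd).1
              (by simpa [List.get_eq_getElem] using heq)
            omega
          · -- G.Adj of same vertex with itself
            have hGadj : G.Adj ((B n).get j).1 ((B n).get i).1 := hadj.1
            obtain ⟨_, h1⟩ := fst_mem (List.get_mem (B n) i)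
            obtain ⟨_, h2⟩ := fst_mem (List.get_mem (B n) j)
            rw [h1, h2] at hGadj
            exact G.irrefl hGadj
      · -- type b block : copy of t, witness uses private vertices
        have hBn : B n = t.map (fun w => (l.get ⟨n, hnk⟩, w)) := by
          simp only [hB]
          rw [dif_pos hnk, if_neg hA]
        -- the private vertex of l at position n
        obtain ⟨x, hx1, hx2⟩ := hl.1.2 ⟨n, hnk⟩
        -- there is an earlier neighbor since not type a
        simp only [htypeA, not_forall, not_not] at hA
        obtain ⟨j0, hj0, hj0adj⟩ := hA
        have hGnx : G.Adj (l.get ⟨n, hnk⟩) x := by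
          rcases mem_closedNbhd_iff.1 hx1 with rfl | h
          · exact absurd (mem_closedNbhd_iff.2 (Or.inr hj0adj)) (hx2 j0 hj0)
          · exact h
        have hBlen : (B n).length = t.length := by rw [hBn, List.length_map]
        intro i
        have hit : (i : ℕ) < t.length := lt_of_lt_of_le i.2 hBlen.le
        obtain ⟨u, hu1, hu2⟩ := ht.1.2 ⟨i, hit⟩
        have hHadj : H.Adj (t.get ⟨i, hit⟩) u := hu1
        have hgeti : (B n).get i = (l.get ⟨n, hnk⟩, t.get ⟨i, hit⟩) := by
          simp [hBn, List.get_eq_getElem, List.getElem_map]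
        refine ⟨(x, u), ?_, ?_, ?_⟩
        · rw [hgeti]
          exact mem_closedNbhd_iff.2 (Or.inr ⟨hGnx, hHadj⟩)
        · intro a ha hmem
          obtain ⟨m, hm, ham⟩ := mem_buildSeq.1 ha
          obtain ⟨hmk, hfst⟩ := fst_mem ham
          rcases mem_closedNbhd_iff.1 hmem with heq | hadj
          · have : x = l.get ⟨m, hmk⟩ := by rw [← hfst, ← heq]
            exact hx2 ⟨m, hmk⟩ (by simpa using hm)
              (mem_closedNbhd_iff.2 (Or.inl this))
          · have : G.Adj (l.get ⟨m, hmk⟩) x := by rw [← hfst]; exact hadj.1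
            exact hx2 ⟨m, hmk⟩ (by simpa using hm)
              (mem_closedNbhd_iff.2 (Or.inr this))
        · intro j hj hmem
          have hjt : (j : ℕ) < t.length := lt_of_lt_of_le j.2 hBlen.le
          have hgetj : (B n).get j = (l.get ⟨n, hnk⟩, t.get ⟨j, hjt⟩) := by
            simp [hBn, List.get_eq_getElem, List.getElem_map]
          rw [hgetj] at hmem
          rcases mem_closedNbhd_iff.1 hmem with heq | hadj
          · have : x = l.get ⟨n, hnk⟩ := congrArg Prod.fst heq
            exact (G.ne_of_adj hGnx).symm this
          · exact hu2 ⟨j, hjt⟩ hj hadj.2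
  -- the full sequence
  refine ⟨buildSeq B k, ⟨hlegal k le_rfl, ?_⟩, ?_⟩
  · -- domination
    rintro ⟨g, h⟩
    obtain ⟨d, hd, hgd⟩ := hl.2 g
    obtain ⟨idx, hidx⟩ := List.get_of_mem hd
    obtain ⟨i, hik⟩ : ∃ i : Fin k, l.get i = d := ⟨idx, hidx⟩
    -- helper: membership of block elements in the full sequence
    have hmemL : ∀ (m : Fin k) (w : W),
        w ∈ (if typeA m then (Finset.univ : Finset W).toList else t) →
        (l.get m, w) ∈ buildSeq B k := by
      intro m w hw
      refine mem_buildSeq.2 ⟨m, m.2, ?_⟩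
      simp only [hB, dif_pos m.2]
      exact List.mem_map.2 ⟨w, by simpa using hw, rfl⟩
    by_cases hA : typeA i
    · have hmemW : ∀ w : W, w ∈ (if typeA i then (Finset.univ : Finset W).toList else t) := by
        intro w
        rw [if_pos hA]
        exact Finset.mem_toList.2 (Finset.mem_univ _)
      rcases mem_closedNbhd_iff.1 (hik ▸ hgd) with heq | hadj
      · refine ⟨(l.get i, h), hmemL i h (hmemW h), ?_⟩
        exact mem_closedNbhd_iff.2 (Or.inl (by rw [heq]))
      · obtain ⟨w, hw⟩ := hH h
        refine ⟨(l.get i, w), hmemL i w (hmemW w), ?_⟩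
        exact mem_closedNbhd_iff.2 (Or.inr ⟨hadj, hw.symm⟩)
    · -- not type a
      simp only [htypeA, not_forall, not_not] at hA
      obtain ⟨j0, hj0, hj0adj⟩ := hA
      rcases mem_closedNbhd_iff.1 (hik ▸ hgd) with heq | hadj
      · -- g = l.get i : use the earlier block j0
        have hwex : ∃ w, w ∈ (if typeA j0 then (Finset.univ : Finset W).toList else t) ∧
            H.Adj w h := by
          by_cases hA0 : typeA j0
          · obtain ⟨w, hw⟩ := hH h
            exact ⟨w, by rw [if_pos hA0]; exact Finset.mem_toList.2 (Finset.mem_univ _), hw.symm⟩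
          · obtain ⟨w, hw, hwh⟩ := ht.2 h
            exact ⟨w, by rw [if_neg hA0]; exact hw, hwh⟩
        obtain ⟨w, hw, hwadj⟩ := hwex
        refine ⟨(l.get j0, w), hmemL j0 w hw, ?_⟩
        refine mem_closedNbhd_iff.2 (Or.inr ⟨?_, hwadj⟩)
        rw [heq]; exact hj0adj
      · obtain ⟨w, hw, hwh⟩ := ht.2 h
        refine ⟨(l.get i, w), hmemL i w (by
          simp only [htypeA]
          rw [if_neg (by push_neg; exact ⟨j0, hj0, hj0adj⟩)]
          exact hw), ?_⟩
        exact mem_closedNbhd_iff.2 (Or.inr ⟨hadj, hwh⟩)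
  · -- length computation
    rw [length_buildSeq]
    have hBlen : ∀ m ∈ Finset.range k, (B m).length =
        if h : m < k then (if typeA ⟨m, h⟩ then Fintype.card W else t.length) else 0 := by
      intro m hm
      simp only [hB]
      split
      · split <;> simp [Finset.length_toList]
      · simp
    rw [Finset.sum_congr rfl hBlen]
    have : ∑ m ∈ Finset.range k, (if h : m < k then
        (if typeA ⟨m, h⟩ then Fintype.card W else t.length) else 0)
        = ∑ i : Fin k, (if typeA i then Fintype.card W else t.length) := by
      rw [Finset.sum_range fun m => _]
      · apply Finset.sum_congr rfl
        intro i _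
        simp [i.2]
    rw [this, Finset.sum_ite, Finset.sum_const, Finset.sum_const, smul_eq_mul, smul_eq_mul]
    have haval : (Finset.univ.filter typeA).card = aVal G l := rfl
    have hcompl : (Finset.univ.filter (fun i => ¬ typeA i)).card = k - aVal G l := by
      have := Finset.card_filter_add_card_filter_not (s := Finset.univ) typeA
      simp only [Finset.card_univ, Fintype.card_fin] at this
      omega
    rw [haval, hcompl]
    ring

lemma isDomSeq_swap {V W : Type*} (G : SimpleGraph V) (H : SimpleGraph W) {L : List (W × V)}
    (h : IsDomSeq (directProd H G) L) :
    IsDomSeq (directProd G H) (L.map Prod.swap) := by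
  have hswap : ∀ (p q : W × V), p.swap ∈ closedNbhd (directProd G H) q.swap ↔
      p ∈ closedNbhd (directProd H G) q := by
    intro p q
    rw [mem_closedNbhd_iff, mem_closedNbhd_iff]
    constructor
    · rintro (heq | hadj)
      · exact Or.inl (Prod.swap_injective heq)
      · exact Or.inr ⟨hadj.2, hadj.1⟩
    · rintro (heq | hadj)
      · exact Or.inl (congrArg Prod.swap heq)
      · exact Or.inr ⟨hadj.2, hadj.1⟩
  have hlenmap : (L.map Prod.swap).length = L.length := List.length_map _
  constructor
  constructor
  · exact h.1.1.map Prod.swap_injective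
  · intro i
    have hi : (i : ℕ) < L.length := lt_of_lt_of_le i.2 hlenmap.le
    obtain ⟨u, hu1, hu2⟩ := h.1.2 ⟨i, hi⟩
    have hget : (L.map Prod.swap).get i = (L.get ⟨i, hi⟩).swap := by
      simp [List.get_eq_getElem, List.getElem_map]
    refine ⟨u.swap, by rw [hget]; exact (hswap u _).2 hu1, ?_⟩
    intro j hj
    have hj' : (j : ℕ) < L.length := lt_of_lt_of_le j.2 hlenmap.le
    have hgetj : (L.map Prod.swap).get j = (L.get ⟨j, hj'⟩).swap := by
      simp [List.get_eq_getElem, List.getElem_map]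
    rw [hgetj]
    intro hmem
    exact hu2 ⟨j, hj'⟩ hj ((hswap u _).1 hmem)
  · intro v
    obtain ⟨u, hu, hv⟩ := h.2 v.swap
    refine ⟨u.swap, List.mem_map.2 ⟨u, hu, rfl⟩, ?_⟩
    have := (hswap v.swap u).2 hv
    simpa using this

lemma grundyDomNum_ge_of_isDomSeq {V : Type*} [Fintype V] {G : SimpleGraph V} {L : List V}
    (h : IsDomSeq G L) : L.length ≤ grundyDomNum G := by
  apply le_csSup
  · refine ⟨Fintype.card V, ?_⟩
    rintro n ⟨l, hl, rfl⟩
    exact hl.1.1.length_le_card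
  · exact ⟨L, h, rfl⟩

end Aux

theorem stmt_13 {V W : Type*} [Fintype V] [Fintype W]
    (G : SimpleGraph V) (H : SimpleGraph W)
    [DecidableRel G.Adj] [DecidableRel H.Adj]
    (hG : ∀ v : V, ∃ u : V, G.Adj v u) (hH : ∀ v : W, ∃ u : W, H.Adj v u) :
    grundyDomNum (directProd G H) ≥
      max
        (sSup {n | ∃ l : List V, IsDomSeq G l ∧
          aVal G l * Fintype.card W + grundyTotalDomNum H * (l.length - aVal G l) = n})
        (sSup {n | ∃ l : List W, IsDomSeq H l ∧
          aVal H l * Fintype.card V + grundyTotalDomNum G * (l.length - aVal H l) = n}) := by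
  classical
  rw [ge_iff_le, max_le_iff]
  constructor
  · apply csSup_le'
    rintro n ⟨l, hl, rfl⟩
    obtain ⟨t, ht, htlen⟩ := exists_max_totalDomSeq H hH
    obtain ⟨L, hL, hLlen⟩ := core_construction G H hH l hl t ht
    calc aVal G l * Fintype.card W + grundyTotalDomNum H * (l.length - aVal G l)
        = L.length := by rw [hLlen, htlen]
      _ ≤ grundyDomNum (directProd G H) := grundyDomNum_ge_of_isDomSeq hL
  · apply csSup_le'
    rintro n ⟨l, hl, rfl⟩
    obtain ⟨t, ht, htlen⟩ := exists_max_totalDomSeq G hG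
    obtain ⟨L, hL, hLlen⟩ := core_construction H G hG l hl t ht
    have hL' := isDomSeq_swap G H hL
    calc aVal H l * Fintype.card V + grundyTotalDomNum G * (l.length - aVal H l)
        = (L.map Prod.swap).length := by rw [List.length_map, hLlen, htlen]
      _ ≤ grundyDomNum (directProd G H) := grundyDomNum_ge_of_isDomSeq hL'
end
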